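/- arXiv:0912.1631 — 2 statements merged into one kernel-verified Lean document; each statement's English description precedes it below -/
import Mathlib

section
/- Let λ ≠ 0, m ≠ 1 be real constants and fix ε ∈ ℝ. If φ : ℝ × ℝ → ℝ is a positive differentiable solution of u_t + u^{1−m}·u_x + λ·u^m = 0 on ℝ², then the function ψ(x,t) = (φ(x + ε t, t)^{1−m} − ε)^{1/(1−m)} satisfies the same equation at every point (x,t) where φ(x + ε t, t)^{1−m} − ε > 0. -/
/-!
Substituting `w = u ^ (1 - m)` turns `u_t + u^{1-m} u_x + λ u^m = 0` for positive `u` into the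
forced inviscid Burgers equation `w_t + w w_x + λ (1 - m) = 0`: the residuals differ by the
nonvanishing factor `(1 - m) u^{-m}`. Burgers' equation is invariant under the Galilean boost
`w(x, t) ↦ w(x + ε t, t) - ε`, and `ψ` is exactly the boost of `φ ^ (1 - m)` taken back to the
power `1 / (1 - m)`.
-/

open Real Filter Topology

noncomputable def dampedBurgersResidual (lam m : ℝ) (u : ℝ × ℝ → ℝ) (p : ℝ × ℝ) : ℝ :=
  fderiv ℝ u p (0, 1) + u p ^ (1 - m) * fderiv ℝ u p (1, 0) + lam * u p ^ m

noncomputable def forcedBurgersResidual (c : ℝ) (w : ℝ × ℝ → ℝ) (p : ℝ × ℝ) : ℝ :=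
  fderiv ℝ w p (0, 1) + w p * fderiv ℝ w p (1, 0) + c

theorem forcedBurgersResidual_rpow_one_sub {u : ℝ × ℝ → ℝ} {p : ℝ × ℝ}
    (hu : DifferentiableAt ℝ u p) (hpos : 0 < u p) (lam m : ℝ) :
    forcedBurgersResidual (lam * (1 - m)) (fun q => u q ^ (1 - m)) p =
      (1 - m) * u p ^ (-m) * dampedBurgersResidual lam m u p := by
  have hderiv := (hu.hasFDerivAt.rpow_const (p := 1 - m) (Or.inl hpos.ne')).fderiv
  have hcancel : u p ^ (-m) * u p ^ m = 1 := by
    rw [rpow_neg hpos.le, inv_mul_cancel₀ (rpow_pos_of_pos hpos m).ne']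
  rw [forcedBurgersResidual, dampedBurgersResidual, hderiv, show 1 - m - 1 = -m by ring]
  simp only [smul_apply, smul_eq_mul]
  linear_combination -lam * (1 - m) * hcancel

theorem forcedBurgersResidual_galilean {w : ℝ × ℝ → ℝ} {c ε : ℝ} {p : ℝ × ℝ}
    (hw : DifferentiableAt ℝ w (p.1 + ε * p.2, p.2)) :
    forcedBurgersResidual c (fun q => w (q.1 + ε * q.2, q.2) - ε) p =
      forcedBurgersResidual c w (p.1 + ε * p.2, p.2) := by
  have hshear : HasFDerivAt (fun q : ℝ × ℝ => (q.1 + ε * q.2, q.2))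
      ((ContinuousLinearMap.fst ℝ ℝ ℝ + ε • ContinuousLinearMap.snd ℝ ℝ ℝ).prod
        (ContinuousLinearMap.snd ℝ ℝ ℝ)) p :=
    (hasFDerivAt_fst.add (hasFDerivAt_snd.const_mul ε)).prodMk hasFDerivAt_snd
  have hderiv := ((hw.hasFDerivAt.comp p hshear).sub_const ε).fderiv
  simp only [Function.comp_def] at hderiv
  set L := fderiv ℝ w (p.1 + ε * p.2, p.2)
  have hboost_dir : L (ε, 1) = ε * L (1, 0) + L (0, 1) := by
    rw [show ((ε, 1) : ℝ × ℝ) = ε • (1, 0) + (0, 1) by simp, map_add, map_smul, smul_eq_mul]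
  simp only [forcedBurgersResidual, hderiv, ContinuousLinearMap.comp_apply,
    ContinuousLinearMap.prod_apply, add_apply, ContinuousLinearMap.coe_fst', smul_apply,
    ContinuousLinearMap.coe_snd', smul_eq_mul, mul_one, mul_zero, zero_add, add_zero, hboost_dir]
  ring

theorem Filter.EventuallyEq.forcedBurgersResidual_eq {c : ℝ} {w v : ℝ × ℝ → ℝ} {p : ℝ × ℝ}
    (h : w =ᶠ[𝓝 p] v) :
    forcedBurgersResidual c w p = forcedBurgersResidual c v p := by
  simp only [forcedBurgersResidual, h.fderiv_eq, h.eq_of_nhds]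

theorem case3_G6_transformation_general
    (lam m : ℝ) (hm : m ≠ 1) (ε : ℝ)
    (φ : ℝ × ℝ → ℝ)
    (hφ : Differentiable ℝ φ)
    (hpos : ∀ x t : ℝ, 0 < φ (x, t))
    (hsol : ∀ x t : ℝ,
      fderiv ℝ φ (x, t) (0, 1) + φ (x, t) ^ (1 - m) * fderiv ℝ φ (x, t) (1, 0)
        + lam * φ (x, t) ^ m = 0) :
    ∀ ψ : ℝ × ℝ → ℝ,
      ψ = (fun p : ℝ × ℝ =>
        (φ (p.1 + ε * p.2, p.2) ^ (1 - m) - ε) ^ (1 / (1 - m))) →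
      ∀ x t : ℝ,
        0 < φ (x + ε * t, t) ^ (1 - m) - ε →
        DifferentiableAt ℝ ψ (x, t) ∧
        fderiv ℝ ψ (x, t) (0, 1) + ψ (x, t) ^ (1 - m) * fderiv ℝ ψ (x, t) (1, 0)
          + lam * ψ (x, t) ^ m = 0 := by
  rintro ψ rfl x t hboost
  have h1m : 1 - m ≠ 0 := sub_ne_zero.mpr hm.symm
  set w : ℝ × ℝ → ℝ := fun q => φ q ^ (1 - m)
  set wBoost : ℝ × ℝ → ℝ := fun q => w (q.1 + ε * q.2, q.2) - ε
  have hw : Differentiable ℝ w := fun q => (hφ q).rpow_const (Or.inl (hpos q.1 q.2).ne')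
  have hwBoost : DifferentiableAt ℝ wBoost (x, t) := by fun_prop
  have hψ : DifferentiableAt ℝ (fun q => wBoost q ^ (1 / (1 - m))) (x, t) :=
    hwBoost.rpow_const (Or.inl hboost.ne')
  have hψpos : 0 < wBoost (x, t) ^ (1 / (1 - m)) := rpow_pos_of_pos hboost _
  have hψ_rpow : (fun q => (wBoost q ^ (1 / (1 - m))) ^ (1 - m)) =ᶠ[𝓝 (x, t)] wBoost := by
    filter_upwards [hwBoost.continuousAt.eventually (lt_mem_nhds hboost)] with q hq
    rw [one_div, rpow_inv_rpow hq.le h1m]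
  refine ⟨hψ, ?_⟩
  have hscaled := calc
    (1 - m) * (wBoost (x, t) ^ (1 / (1 - m))) ^ (-m) *
        dampedBurgersResidual lam m (fun q => wBoost q ^ (1 / (1 - m))) (x, t)
      = forcedBurgersResidual (lam * (1 - m)) wBoost (x, t) := by
        rw [← forcedBurgersResidual_rpow_one_sub hψ hψpos, hψ_rpow.forcedBurgersResidual_eq]
    _ = forcedBurgersResidual (lam * (1 - m)) w (x + ε * t, t) :=
        forcedBurgersResidual_galilean (hw _)
    _ = (1 - m) * φ (x + ε * t, t) ^ (-m) * dampedBurgersResidual lam m φ (x + ε * t, t) :=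
        forcedBurgersResidual_rpow_one_sub (hφ _) (hpos _ _) lam m
    _ = 0 := by rw [dampedBurgersResidual, hsol, mul_zero]
  exact (mul_eq_zero.mp hscaled).resolve_left (mul_ne_zero h1m (rpow_pos_of_pos hψpos _).ne')

/-- case k = 1−m. If φ is a positive differentiable solution of
`u_t + u^{1−m}·u_x + λ·u^m = 0` on ℝ², then
`ψ(x,t) = (φ(x + εt, t)^{1−m} − ε)^{1/(1−m)}` satisfies the same equation at
every point where `φ(x + εt, t)^{1−m} − ε > 0`. -/
theorem case3_G6_transformation
    (lam m : ℝ) (hlam : lam ≠ 0) (hm : m ≠ 1) (ε : ℝ)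
    (φ : ℝ × ℝ → ℝ)
    (hφ : Differentiable ℝ φ)
    (hpos : ∀ x t : ℝ, 0 < φ (x, t))
    (hsol : ∀ x t : ℝ,
      fderiv ℝ φ (x, t) (0, 1) + φ (x, t) ^ (1 - m) * fderiv ℝ φ (x, t) (1, 0)
        + lam * φ (x, t) ^ m = 0) :
    ∀ ψ : ℝ × ℝ → ℝ,
      ψ = (fun p : ℝ × ℝ =>
        (φ (p.1 + ε * p.2, p.2) ^ (1 - m) - ε) ^ (1 / (1 - m))) →
      ∀ x t : ℝ,
        0 < φ (x + ε * t, t) ^ (1 - m) - ε →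
        DifferentiableAt ℝ ψ (x, t) ∧
        fderiv ℝ ψ (x, t) (0, 1) + ψ (x, t) ^ (1 - m) * fderiv ℝ ψ (x, t) (1, 0)
          + lam * ψ (x, t) ^ m = 0 :=
  case3_G6_transformation_general lam m hm ε φ hφ hpos hsol
end

section
/- Let λ ≠ 0, k ≠ 0 be real constants and fix ε ∈ ℝ. If φ : ℝ × ℝ → ℝ is a positive differentiable solution of u_t + u^k·u_x + λ·u = 0 on ℝ², then the function ψ(x,t) = (φ(x/(1 + λ ε k e^{−λ k t}), (1/(λk))·ln(λ ε k + e^{λ k t}))^k − λ² k² ε x e^{−λ k t}/(1 + λ ε k e^{−λ k t}))^{1/k} satisfies the same equation at every point (x,t) where λ ε k + e^{λ k t} > 0 and the quantity φ(x/(1 + λ ε k e^{−λ k t}), (1/(λk))·ln(λ ε k + e^{λ k t}))^k − λ² k² ε x e^{−λ k t}/(1 + λ ε k e^{−λ k t}) is positive. -/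
/-!
For positive `u`, the substitution `w = u ^ k` multiplies the residual of
`u_t + u^k u_x + λ u` by the nonzero factor `k u^(k-1)` and turns it into the residual of the
damped Burgers equation `w_t + w w_x + μ w = 0` with `μ = λ k`. With `S = μ ε + e^(μ t)`, the map
`w ↦ w (x e^(μ t) / S, (log S) / μ) - μ² ε x / S` multiplies the damped Burgers residual by
`e^(μ t) / S`, so it maps solutions to solutions. The transformation of the theorem is this map
conjugated by `u ↦ u ^ k`, written with `1 + μ ε e^(-μ t) = S e^(-μ t)`.
-/

open Real ContinuousLinearMap

noncomputable section

/-- `u_t + u^k u_x + λ u` for a function of `(x, t)` with value `u` and derivative `L`. -/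
def dampedResidual (k lam u : ℝ) (L : ℝ × ℝ →L[ℝ] ℝ) : ℝ :=
  L (0, 1) + u ^ k * L (1, 0) + lam * u

lemma dampedResidual_rpow {w r : ℝ} (hw : 0 < w) (hr : r ≠ 0) (k lam : ℝ)
    (L : ℝ × ℝ →L[ℝ] ℝ) :
    dampedResidual k lam (w ^ r) ((r * w ^ (r - 1)) • L)
      = r * w ^ (r - 1) * dampedResidual (r * k) (lam / r) w L := by
  have hpow : w ^ r = w ^ (r - 1) * w := by rw [← rpow_add_one hw.ne', sub_add_cancel]
  simp only [dampedResidual, smul_apply, smul_eq_mul, ← rpow_mul hw.le]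
  rw [hpow]
  field_simp

lemma apply_pair_eq (L : ℝ × ℝ →L[ℝ] ℝ) (a b : ℝ) :
    L (a, b) = a * L (1, 0) + b * L (0, 1) := by
  rw [← smul_eq_mul, ← smul_eq_mul, ← map_smul, ← map_smul, ← map_add]
  simp

lemma hasDerivAt_exp_const_mul (μ t : ℝ) :
    HasDerivAt (fun s => exp (μ * s)) (μ * exp (μ * t)) t := by
  simpa [mul_comm] using ((hasDerivAt_id t).const_mul μ).exp

def burgersChart (μ ε : ℝ) (p : ℝ × ℝ) : ℝ × ℝ :=
  (p.1 * (exp (μ * p.2) / (μ * ε + exp (μ * p.2))), log (μ * ε + exp (μ * p.2)) / μ)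

def burgersTransform (μ ε : ℝ) (w : ℝ × ℝ → ℝ) (p : ℝ × ℝ) : ℝ :=
  w (burgersChart μ ε p) - μ ^ 2 * ε * p.1 / (μ * ε + exp (μ * p.2))

lemma burgersTransform_apply (μ ε : ℝ) (w : ℝ × ℝ → ℝ) (x t : ℝ) :
    burgersTransform μ ε w (x, t) =
      w (x / (1 + μ * ε * exp (-(μ * t))), 1 / μ * log (μ * ε + exp (μ * t)))
        - μ ^ 2 * ε * x * exp (-(μ * t)) / (1 + μ * ε * exp (-(μ * t))) := by
  have h : 1 + μ * ε * exp (-(μ * t)) = (μ * ε + exp (μ * t)) * exp (-(μ * t)) := by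
    rw [add_mul, ← exp_add, add_neg_cancel, exp_zero]
    ring
  rw [h, mul_div_mul_right _ _ (exp_ne_zero _), exp_neg, div_mul_eq_div_div, div_inv_eq_mul,
    div_mul_eq_mul_div, mul_div_assoc, one_div_mul_eq_div]
  rfl

variable {μ ε x t : ℝ}

lemma hasFDerivAt_burgersChart (hμ : μ ≠ 0) (hS : μ * ε + exp (μ * t) ≠ 0) :
    HasFDerivAt (burgersChart μ ε)
      (((exp (μ * t) / (μ * ε + exp (μ * t))) • fst ℝ ℝ ℝ
          + (μ ^ 2 * ε * x * exp (μ * t) / (μ * ε + exp (μ * t)) ^ 2) • snd ℝ ℝ ℝ).prod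
        ((exp (μ * t) / (μ * ε + exp (μ * t))) • snd ℝ ℝ ℝ)) (x, t) := by
  have hE := hasDerivAt_exp_const_mul μ t
  have hS' := hE.const_add (μ * ε)
  have hA := (hE.fun_div hS' hS).comp_hasFDerivAt (x, t) (hasFDerivAt_snd (p := (x, t)) (𝕜 := ℝ))
  have hL := ((hS'.log hS).div_const μ).comp_hasFDerivAt (x, t)
    (hasFDerivAt_snd (p := (x, t)) (𝕜 := ℝ))
  refine HasFDerivAt.prodMk ?_ ?_
  · refine (hasFDerivAt_fst.mul hA).congr_fderiv (ContinuousLinearMap.ext fun v => ?_)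
    simp only [Function.comp_apply, add_apply, smul_apply, coe_snd', smul_eq_mul, coe_fst']
    field_simp
    ring
  · exact hL.congr_fderiv (by rw [mul_div_assoc, mul_div_cancel_left₀ _ hμ])

lemma hasFDerivAt_burgersCorrection (hS : μ * ε + exp (μ * t) ≠ 0) :
    HasFDerivAt (fun p : ℝ × ℝ => μ ^ 2 * ε * p.1 / (μ * ε + exp (μ * p.2)))
      ((μ ^ 2 * ε / (μ * ε + exp (μ * t))) • fst ℝ ℝ ℝ
        - (μ ^ 3 * ε * x * exp (μ * t) / (μ * ε + exp (μ * t)) ^ 2) • snd ℝ ℝ ℝ) (x, t) := by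
  have hS' := (hasDerivAt_exp_const_mul μ t).const_add (μ * ε)
  have hB := ((hasDerivAt_const t (μ ^ 2 * ε)).fun_div hS' hS).comp_hasFDerivAt (x, t)
    (hasFDerivAt_snd (p := (x, t)) (𝕜 := ℝ))
  have hfun : (fun p : ℝ × ℝ => μ ^ 2 * ε * p.1 / (μ * ε + exp (μ * p.2)))
      = fun p => p.1 * (μ ^ 2 * ε / (μ * ε + exp (μ * p.2))) := by
    funext p
    ring
  rw [hfun]
  refine (hasFDerivAt_fst.mul hB).congr_fderiv (ContinuousLinearMap.ext fun v => ?_)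
  simp only [Function.comp_apply, add_apply, sub_apply, smul_apply, coe_snd', smul_eq_mul,
    coe_fst']
  field_simp
  ring

theorem exists_hasFDerivAt_burgersTransform_dampedResidual_eq (hμ : μ ≠ 0)
    (hS : μ * ε + exp (μ * t) ≠ 0) {w : ℝ × ℝ → ℝ} {W : ℝ × ℝ →L[ℝ] ℝ}
    (hw : HasFDerivAt w W (burgersChart μ ε (x, t))) :
    ∃ W', HasFDerivAt (burgersTransform μ ε w) W' (x, t) ∧
      dampedResidual 1 μ (burgersTransform μ ε w (x, t)) W'
        = exp (μ * t) / (μ * ε + exp (μ * t))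
          * dampedResidual 1 μ (w (burgersChart μ ε (x, t))) W := by
  refine ⟨_, (hw.comp (x, t) (hasFDerivAt_burgersChart hμ hS)).sub
    (hasFDerivAt_burgersCorrection hS), ?_⟩
  simp only [dampedResidual, burgersTransform, burgersChart, rpow_one, sub_apply, comp_apply,
    prod_apply, add_apply, smul_apply, coe_fst', coe_snd', smul_eq_mul, mul_zero, mul_one,
    zero_add, add_zero, sub_zero, zero_sub]
  rw [apply_pair_eq W (μ ^ 2 * ε * x * exp (μ * t) / _), apply_pair_eq W (exp (μ * t) / _) 0]
  field_simp
  ring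

end

/-- case m = 1. If φ is a positive differentiable solution of
`u_t + u^k·u_x + λ·u = 0` on ℝ², then
`ψ(x,t) = (φ(x/(1 + λεk e^{−λkt}), (1/(λk))·ln(λεk + e^{λkt}))^k
            − λ²k²ε x e^{−λkt}/(1 + λεk e^{−λkt}))^{1/k}`
satisfies the same equation at every point where `λεk + e^{λkt} > 0` and the
quantity under the (1/k)-th power is positive. -/
theorem case7_G8_transformation
    (lam k : ℝ) (hlam : lam ≠ 0) (hk : k ≠ 0) (ε : ℝ)
    (φ : ℝ × ℝ → ℝ)
    (hφ : Differentiable ℝ φ)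
    (hpos : ∀ x t : ℝ, 0 < φ (x, t))
    (hsol : ∀ x t : ℝ,
      fderiv ℝ φ (x, t) (0, 1) + φ (x, t) ^ k * fderiv ℝ φ (x, t) (1, 0)
        + lam * φ (x, t) = 0) :
    ∀ ψ : ℝ × ℝ → ℝ,
      ψ = (fun p : ℝ × ℝ =>
        (φ (p.1 / (1 + lam * ε * k * exp (-(lam * k * p.2))),
            (1 / (lam * k)) * Real.log (lam * ε * k + exp (lam * k * p.2))) ^ k
          - lam ^ 2 * k ^ 2 * ε * p.1 * exp (-(lam * k * p.2)) /
              (1 + lam * ε * k * exp (-(lam * k * p.2)))) ^ (1 / k)) →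
      ∀ x t : ℝ,
        0 < lam * ε * k + exp (lam * k * t) →
        0 < φ (x / (1 + lam * ε * k * exp (-(lam * k * t))),
              (1 / (lam * k)) * Real.log (lam * ε * k + exp (lam * k * t))) ^ k
            - lam ^ 2 * k ^ 2 * ε * x * exp (-(lam * k * t)) /
                (1 + lam * ε * k * exp (-(lam * k * t))) →
        DifferentiableAt ℝ ψ (x, t) ∧
        fderiv ℝ ψ (x, t) (0, 1) + ψ (x, t) ^ k * fderiv ℝ ψ (x, t) (1, 0)
          + lam * ψ (x, t) = 0 := by
  intro ψ hψ x t hS hψpos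
  rw [mul_right_comm lam ε k] at hS hψpos
  obtain rfl : ψ = fun p => burgersTransform (lam * k) ε (fun q => φ q ^ k) p ^ (1 / k) := by
    rw [hψ, mul_right_comm lam ε k, ← mul_pow]
    funext ⟨y, s⟩
    rw [burgersTransform_apply]
  have hw_pos : 0 < burgersTransform (lam * k) ε (fun q => φ q ^ k) (x, t) := by
    rwa [burgersTransform_apply, mul_pow]
  set q := burgersChart (lam * k) ε (x, t)
  have hφq : 0 < φ q := hpos q.1 q.2
  have hφk := (hφ q).hasFDerivAt.rpow_const (p := k) (Or.inl hφq.ne')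
  have hφk_sol : dampedResidual 1 (lam * k) (φ q ^ k) ((k * φ q ^ (k - 1)) • fderiv ℝ φ q) = 0 := by
    rw [dampedResidual_rpow hφq hk, mul_one, mul_div_cancel_right₀ _ hk]
    exact mul_eq_zero_of_right _ (hsol q.1 q.2)
  obtain ⟨W, hW, hres⟩ :=
    exists_hasFDerivAt_burgersTransform_dampedResidual_eq (mul_ne_zero hlam hk) hS.ne' hφk
  have hψ_deriv := hW.rpow_const (p := 1 / k) (Or.inl hw_pos.ne')
  refine ⟨hψ_deriv.differentiableAt, ?_⟩
  rw [hψ_deriv.fderiv]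
  change dampedResidual k lam _ _ = 0
  rw [dampedResidual_rpow hw_pos (one_div_ne_zero hk), one_div_mul_cancel hk, div_div_eq_mul_div,
    div_one, hres, hφk_sol, mul_zero, mul_zero]
end
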